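/- arXiv:1707.06144 — 4 statements merged into one kernel-verified Lean document; each statement's English description precedes it below -/
import Mathlib

section
/- Let f : closed unit disc → ℝ² be continuous, let γ = f restricted to S¹, and let p be a point not on γ with winding number of γ around p equal to zero. Then there exists g : closed unit disc → ℝ² homotopic to f, agreeing with f on S¹, such that p is not in the image of the open disc under g. -/
/-!
Winding number zero says exactly that `γ - p` has a continuous logarithm on `S¹`:
`γ = p + exp ∘ φ`. Extend `φ` to the closed disc by Tietze's theorem to some `Φ`; then
`g = p + exp ∘ Φ` agrees with `f` on `S¹` and omits `p` everywhere, and, `ℂ` being convex,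
it is homotopic to `f` along the straight line.
-/

noncomputable section

/-- `WindingNumber γ p n` : the closed curve `γ` (period-one parametrized) has winding
number `n` around `p`; equivalently `n` is the degree of the normalized circle map
`t ↦ (γ t - p)/‖γ t - p‖`, expressed through a lift under `z ↦ p + exp z`. -/
def WindingNumber (γ : ℝ → ℂ) (p : ℂ) (n : ℤ) : Prop :=
  ∃ g : ℝ → ℂ, Continuous g ∧ (∀ t, p + Complex.exp (g t) = γ t) ∧
    ∀ t, g (t + 1) = g t + (n : ℂ) * (2 * Real.pi * Complex.I)

/-- The standard parametrization point `e^{2πit}` of the unit circle `S¹ ⊆ ℂ`. -/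
def circlePt (t : ℝ) : Metric.sphere (0 : ℂ) 1 :=
  ⟨Complex.exp ((2 * Real.pi * t : ℝ) * Complex.I), by
    first
      | rw [Metric.mem_sphere, dist_zero_right, Complex.norm_exp_ofReal_mul_I]
      | simp [Complex.norm_exp]⟩

/-- The inclusion of the unit circle into the closed unit disc. -/
def sphereIncl (z : Metric.sphere (0:ℂ) 1) : Metric.closedBall (0:ℂ) 1 :=
  ⟨z.val, Metric.sphere_subset_closedBall z.property⟩

open Metric

theorem ContinuousMap.homotopic_of_module {X E : Type*} [TopologicalSpace X]
    [TopologicalSpace E] [AddCommGroup E] [Module ℝ E] [ContinuousAdd E] [ContinuousSMul ℝ E]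
    (f g : C(X, E)) : f.Homotopic g :=
  ⟨{ toFun := fun q => (1 - (q.1 : ℝ)) • f q.2 + (q.1 : ℝ) • g q.2
     continuous_toFun := by fun_prop
     map_zero_left := by simp
     map_one_left := by simp }⟩

theorem circlePt_surjective : Function.Surjective circlePt := fun z =>
  ⟨Complex.arg z / (2 * Real.pi), Subtype.ext <| by
    have := congrArg Subtype.val (Circle.exp_arg ⟨z.1, z.2⟩)
    rw [Circle.coe_exp] at this
    simpa [circlePt, mul_div_cancel₀ _ Real.two_pi_pos.ne'] using this⟩

theorem Function.Periodic.exists_continuousMap_sphere {X : Type*} [TopologicalSpace X]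
    {w : ℝ → X} (hper : Function.Periodic w 1) (hw : Continuous w) :
    ∃ φ : C(sphere (0:ℂ) 1, X), ∀ t, φ (circlePt t) = w t := by
  let toCircle : C(sphere (0:ℂ) 1, Circle) := ⟨fun z => ⟨z.1, z.2⟩, by fun_prop⟩
  let e := AddCircle.homeomorphCircle (one_ne_zero : (1:ℝ) ≠ 0)
  let lift : C(AddCircle (1:ℝ), X) := ⟨hper.lift, continuous_coinduced_dom.mpr hw⟩
  refine ⟨lift.comp ((e.symm : C(Circle, AddCircle (1:ℝ))).comp toCircle), fun t => ?_⟩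
  have : toCircle (circlePt t) = e t := by
    ext
    rw [AddCircle.homeomorphCircle_apply, AddCircle.toCircle_apply_mk]
    change Complex.exp ((2 * Real.pi * t : ℝ) * Complex.I) = _
    rw [Circle.coe_exp]
    push_cast
    ring_nf
  change hper.lift (e.symm (toCircle (circlePt t))) = w t
  rw [this, e.symm_apply_apply]
  rfl

theorem isClosedEmbedding_sphereIncl : Topology.IsClosedEmbedding sphereIncl :=
  .inclusion sphere_subset_closedBall <|
    isClosed_sphere.preimage continuous_subtype_val

theorem statement1_general (f : C(Metric.closedBall (0:ℂ) 1, ℂ)) (p : ℂ)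
    (h : WindingNumber (fun t => f (sphereIncl (circlePt t))) p 0) :
    ∃ g : C(Metric.closedBall (0:ℂ) 1, ℂ),
      ContinuousMap.Homotopic f g ∧
      (∀ z : Metric.sphere (0:ℂ) 1, g (sphereIncl z) = f (sphereIncl z)) ∧
      ∀ z : Metric.closedBall (0:ℂ) 1, ‖z.val‖ < 1 → g z ≠ p := by
  obtain ⟨w, hw, hfw, hper⟩ := h
  obtain ⟨φ, hφ⟩ := Function.Periodic.exists_continuousMap_sphere
    (fun t => by simpa using hper t) hw
  obtain ⟨Φ, hΦ⟩ := φ.exists_extension' isClosedEmbedding_sphereIncl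
  let g : C(closedBall (0:ℂ) 1, ℂ) := ⟨fun z => p + Complex.exp (Φ z), by fun_prop⟩
  refine ⟨g, f.homotopic_of_module g, fun z => ?_, fun z _ hgz => ?_⟩
  · obtain ⟨t, rfl⟩ := circlePt_surjective z
    change p + Complex.exp (Φ (sphereIncl (circlePt t))) = _
    rw [show Φ (sphereIncl (circlePt t)) = φ (circlePt t) from congrFun hΦ _, hφ, hfw]
  · change p + Complex.exp (Φ z) = p at hgz
    exact Complex.exp_ne_zero (Φ z) (by linear_combination hgz)

/-- If `f` is continuous on the closed unit disc, `γ = f|_{S¹}`, and `p`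
is not on `γ` with winding number of `γ` around `p` zero, then there is `g` homotopic to
`f`, agreeing with `f` on `S¹`, with `p` not in the image of the open disc under `g`. -/
theorem statement1 (f : C(Metric.closedBall (0:ℂ) 1, ℂ)) (p : ℂ)
    (hp : ∀ z : Metric.sphere (0:ℂ) 1, f (sphereIncl z) ≠ p)
    (h : WindingNumber (fun t => f (sphereIncl (circlePt t))) p 0) :
    ∃ g : C(Metric.closedBall (0:ℂ) 1, ℂ),
      ContinuousMap.Homotopic f g ∧
      (∀ z : Metric.sphere (0:ℂ) 1, g (sphereIncl z) = f (sphereIncl z)) ∧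
      ∀ z : Metric.closedBall (0:ℂ) 1, ‖z.val‖ < 1 → g z ≠ p :=
  statement1_general f p h
end
end

section
/- Let R = [-1,1]² ⊂ ℝ² and let f be a continuous map defined on ∂R such that f maps {y=1} into {y>1}, {y=-1} into {y<-1}, {x=1} into {x<1}, and {x=-1} into {x>-1}. Then the Lefschetz index of f along ∂R (positively oriented) equals -1. -/
noncomputable section

/-- A loop in the plane `ℂ`, parametrized with period `1`. -/
def IsLoop (γ : ℝ → ℂ) : Prop := Continuous γ ∧ Function.Periodic γ 1

/-- Degree of a period-one parametrized circle-valued map. -/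
def CircleMapDegree (u : ℝ → ℂ) (d : ℤ) : Prop :=
  ∃ θ : ℝ → ℝ, Continuous θ ∧ (∀ t, u t = Complex.exp ((θ t : ℂ) * Complex.I)) ∧
    ∀ t, θ (t + 1) = θ t + (d : ℝ) * (2 * Real.pi)

/-- The Lefschetz index of `f` along the closed curve `γ`: the degree of
`t ↦ (f (γ t) - γ t) / ‖f (γ t) - γ t‖`. -/
def LefschetzIndex (f : ℂ → ℂ) (γ : ℝ → ℂ) (d : ℤ) : Prop :=
  CircleMapDegree (fun t => (f (γ t) - γ t) / ((‖f (γ t) - γ t‖ : ℝ) : ℂ)) d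

/-- The boundary of the square `R = [-1,1]²`, viewed in `ℂ ≅ ℝ²`. -/
def SqBdry : Set ℂ := {z : ℂ | max |z.re| |z.im| = 1}

/-!
Along `∂R` the displacement `f z - z` is never a nonnegative multiple of `conj z`: on the
vertical edges their real parts, and on the horizontal edges their imaginary parts, have
opposite signs. Hence the unit field `(f z - z) / ‖f z - z‖` never agrees with `conj z / ‖z‖`,
whose degree along a positively oriented loop is `-1`. Two circle maps that never agree have
the same degree: their quotient avoids `1`, so it lifts through a single branch of `arg`.
-/

open Complex ComplexConjugate

theorem SameRay.mul_nonneg {R : Type*} [Field R] [LinearOrder R] [IsStrictOrderedRing R]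
    {a b : R} (h : SameRay R a b) : 0 ≤ a * b := by
  rcases eq_or_ne a 0 with rfl | ha
  · simp
  obtain ⟨r, hr, rfl⟩ := h.exists_nonneg_left ha
  rw [smul_eq_mul, mul_left_comm]
  exact _root_.mul_nonneg hr (mul_self_nonneg a)

theorem Complex.sameRay_of_div_norm_eq {x y : ℂ} (h : x / ‖x‖ = y / ‖y‖) : SameRay ℝ x y := by
  rw [sameRay_iff_inv_norm_smul_eq]
  right; right
  simpa [Complex.real_smul, div_eq_inv_mul] using h

theorem eq_one_or_eq_neg_one_of_mem_sqBdry {z : ℂ} (hz : z ∈ SqBdry) :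
    z.re = 1 ∨ z.re = -1 ∨ z.im = 1 ∨ z.im = -1 := by
  change max |z.re| |z.im| = 1 at hz
  rcases max_choice |z.re| |z.im| with h | h <;> rw [h, abs_eq zero_le_one] at hz <;> tauto

theorem not_sameRay_sub_conj_of_mem_sqBdry {z w : ℂ} (hz : z ∈ SqBdry)
    (htop : z.im = 1 → 1 < w.im) (hbot : z.im = -1 → w.im < -1)
    (hright : z.re = 1 → w.re < 1) (hleft : z.re = -1 → -1 < w.re) :
    ¬SameRay ℝ (w - z) (conj z) := by
  intro h
  have hre := (h.map reLm).mul_nonneg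
  have him := (h.map imLm).mul_nonneg
  simp only [reLm_coe, imLm_coe, sub_re, sub_im, conj_re, conj_im] at hre him
  rcases eq_one_or_eq_neg_one_of_mem_sqBdry hz with hz | hz | hz | hz
  · rw [hz] at hre; linarith [hright hz]
  · rw [hz] at hre; linarith [hleft hz]
  · rw [hz] at him; linarith [htop hz]
  · rw [hz] at him; linarith [hbot hz]

theorem WindingNumber.circleMapDegree_div_norm {γ : ℝ → ℂ} {n : ℤ} (h : WindingNumber γ 0 n) :
    CircleMapDegree (fun t => γ t / ‖γ t‖) n := by
  obtain ⟨g, hgc, hγ, hper⟩ := h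
  refine ⟨fun t => (g t).im, continuous_im.comp hgc, fun t => ?_, fun t => ?_⟩
  · dsimp only
    rw [← hγ t, zero_add, norm_exp, ofReal_exp, ← exp_sub]
    congr 1
    apply Complex.ext <;> simp
  · simp [hper t]

theorem CircleMapDegree.conj {w : ℝ → ℂ} {d : ℤ} (h : CircleMapDegree w d) :
    CircleMapDegree (fun t => conj (w t)) (-d) := by
  obtain ⟨θ, hθc, hw, hper⟩ := h
  refine ⟨fun t => -θ t, hθc.neg, fun t => ?_, fun t => ?_⟩
  · dsimp only
    rw [hw t, ← exp_conj]
    simp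
  · simp only [hper t]
    push_cast
    ring

theorem mem_slitPlane_neg_of_norm_eq_one_of_ne_one {q : ℂ} (hnorm : ‖q‖ = 1) (hq : q ≠ 1) :
    -q ∈ slitPlane := by
  rw [mem_slitPlane_iff_arg]
  refine ⟨fun harg => hq ?_, neg_ne_zero.2 (norm_ne_zero_iff.1 (hnorm ▸ one_ne_zero))⟩
  have := norm_mul_exp_arg_mul_I (-q)
  rw [harg, norm_neg, hnorm, exp_pi_mul_I] at this
  push_cast at this
  linear_combination this

theorem CircleMapDegree.of_forall_ne {u w : ℝ → ℂ} {d : ℤ} (hw : CircleMapDegree w d)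
    (hu : Continuous u) (hper : Function.Periodic u 1) (hnorm : ∀ t, ‖u t‖ = 1)
    (hne : ∀ t, u t ≠ w t) : CircleMapDegree u d := by
  obtain ⟨φ, hφc, hwφ, hφper⟩ := hw
  set q : ℝ → ℂ := fun t => u t * exp (-(φ t * I)) with hq_def
  have hq_norm : ∀ t, ‖q t‖ = 1 := fun t => by
    simp [hq_def, hnorm t, norm_exp, neg_re, mul_re]
  have hq_ne : ∀ t, q t ≠ 1 := fun t h => hne t <| by
    rw [hwφ t, ← mul_one (exp _), ← h, hq_def, mul_left_comm, ← exp_add, add_neg_cancel,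
      exp_zero, mul_one]
  have hslit : ∀ t, -q t ∈ slitPlane := fun t =>
    mem_slitPlane_neg_of_norm_eq_one_of_ne_one (hq_norm t) (hq_ne t)
  have hqc : Continuous q := by fun_prop
  have hq_per : Function.Periodic q 1 := fun t => by
    simp only [hq_def, hper t, hφper t]
    congr 1
    exact exp_eq_exp_iff_exists_int.2 ⟨-d, by push_cast; ring⟩
  refine ⟨fun t => φ t + Real.pi + arg (-q t), ?_, fun t => ?_, fun t => ?_⟩
  · exact (hφc.add continuous_const).add <| continuous_iff_continuousAt.2 fun t =>
      (continuousAt_arg (hslit t)).comp (f := fun s => -q s) hqc.neg.continuousAt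
  · have harg : exp (arg (-q t) * I) = -q t := by
      simpa [hq_norm t] using norm_mul_exp_arg_mul_I (-q t)
    push_cast
    rw [add_mul, add_mul, exp_add, exp_add, harg, exp_pi_mul_I, mul_neg_one, neg_mul_neg]
    simp only [hq_def]
    rw [mul_left_comm, ← exp_add, add_neg_cancel, exp_zero, mul_one]
  · simp only [hφper t, hq_per t]
    ring

theorem statement3_general (f : ℂ → ℂ) (hf : ContinuousOn f SqBdry)
    (γ : ℝ → ℂ) (hloop : IsLoop γ) (hrange : Set.range γ = SqBdry)
    (hpos : WindingNumber γ 0 1)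
    (htop : ∀ z ∈ SqBdry, z.im = 1 → 1 < (f z).im)
    (hbot : ∀ z ∈ SqBdry, z.im = -1 → (f z).im < -1)
    (hright : ∀ z ∈ SqBdry, z.re = 1 → (f z).re < 1)
    (hleft : ∀ z ∈ SqBdry, z.re = -1 → -1 < (f z).re) :
    LefschetzIndex f γ (-1) := by
  obtain ⟨hγc, hγper⟩ := hloop
  have hmem : ∀ t, γ t ∈ SqBdry := fun t => hrange ▸ Set.mem_range_self t
  have hray : ∀ t, ¬SameRay ℝ (f (γ t) - γ t) (conj (γ t)) := fun t =>
    not_sameRay_sub_conj_of_mem_sqBdry (hmem t) (htop _ (hmem t)) (hbot _ (hmem t))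
      (hright _ (hmem t)) (hleft _ (hmem t))
  have hv0 : ∀ t, f (γ t) - γ t ≠ 0 := fun t h => hray t (h ▸ SameRay.zero_left _)
  have hvc : Continuous fun t => f (γ t) - γ t := (hf.comp_continuous hγc hmem).sub hγc
  refine hpos.circleMapDegree_div_norm.conj.of_forall_ne ?_ (fun t => by simp only [hγper t])
    (fun t => ?_) (fun t h => hray t (sameRay_of_div_norm_eq ?_))
  · exact hvc.div (continuous_ofReal.comp hvc.norm) fun t =>
      ofReal_ne_zero.2 (norm_ne_zero_iff.2 (hv0 t))
  · rw [norm_div, norm_real, norm_norm, div_self (norm_ne_zero_iff.2 (hv0 t))]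
  · rw [h, map_div₀, conj_ofReal, norm_conj]

theorem statement3 (f : ℂ → ℂ) (hf : ContinuousOn f SqBdry)
    (γ : ℝ → ℂ) (hloop : IsLoop γ) (hrange : Set.range γ = SqBdry)
    (hinj : Set.InjOn γ (Set.Ico (0:ℝ) 1))
    (hpos : WindingNumber γ 0 1)
    (htop : ∀ z ∈ SqBdry, z.im = 1 → 1 < (f z).im)
    (hbot : ∀ z ∈ SqBdry, z.im = -1 → (f z).im < -1)
    (hright : ∀ z ∈ SqBdry, z.re = 1 → (f z).re < 1)
    (hleft : ∀ z ∈ SqBdry, z.re = -1 → -1 < (f z).re) :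
    LefschetzIndex f γ (-1) :=
  statement3_general f hf γ hloop hrange hpos htop hbot hright hleft
end
end

section
/- Let R = [-1,1]² ⊂ ℝ² and let f be a continuous map defined on ∂R mapping {y=1} into {y<1}, {y=-1} into {y>-1}, {x=1} into {x<1}, and {x=-1} into {x>-1}. Then the Lefschetz index of f along ∂R (positively oriented) equals 1. -/
noncomputable section

/-!
On the side `x = 1` of the square the point `f z` lies in `{x < 1}`, so no point `s • f z` with
`s ∈ [0, 1]` can equal `z`; likewise on the other three sides. Hence
`(s • f z - z) / ‖s • f z - z‖` is a homotopy of circle maps from `z ↦ -z / ‖z‖`, whose degree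
along `γ` is the winding number `1` of `γ` around `0`, to the map defining the Lefschetz index.
-/

open Complex Filter Topology
open scoped Real

lemma Complex.mem_slitPlane_of_norm_eq_one {z : ℂ} (h : ‖z‖ = 1) (hz : z ≠ -1) :
    z ∈ slitPlane := by
  refine mem_slitPlane_iff_arg.2 ⟨fun harg => hz ?_, norm_ne_zero_iff.1 (by simp [h])⟩
  rw [← norm_mul_exp_arg_mul_I z, h, harg, ofReal_one, one_mul, exp_pi_mul_I]

namespace CircleMapDegree

variable {u v : ℝ → ℂ} {d : ℤ}

lemma norm_eq_one (hu : CircleMapDegree u d) (t : ℝ) : ‖u t‖ = 1 := by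
  obtain ⟨θ, -, hθ, -⟩ := hu
  rw [hθ, norm_exp_ofReal_mul_I]

lemma continuous (hu : CircleMapDegree u d) : Continuous u := by
  obtain ⟨θ, hθc, hθ, -⟩ := hu
  rw [funext hθ]
  fun_prop

lemma periodic (hu : CircleMapDegree u d) : Function.Periodic u 1 := by
  obtain ⟨θ, -, hθ, hθp⟩ := hu
  intro t
  rw [hθ, hθ, hθp]
  push_cast
  rw [add_mul, exp_add, mul_assoc, exp_int_mul_two_pi_mul_I, mul_one]

lemma neg (hu : CircleMapDegree u d) : CircleMapDegree (fun t => -u t) d := by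
  obtain ⟨θ, hθc, hθ, hθp⟩ := hu
  refine ⟨fun t => θ t + π, hθc.add continuous_const, fun t => ?_, fun t => ?_⟩
  · dsimp only
    rw [hθ, ofReal_add, add_mul, exp_add, exp_pi_mul_I, mul_neg_one]
  · simp only [hθp]; ring

/-- `v / u` avoids `-1`, where `arg` jumps, so `θ + arg (v / u)` is a continuous lift of `v`. -/
lemma of_ne_neg (hu : CircleMapDegree u d) (hv : Continuous v) (hv1 : ∀ t, ‖v t‖ = 1)
    (hvp : Function.Periodic v 1) (hne : ∀ t, v t ≠ -u t) : CircleMapDegree v d := by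
  have hu0 t : u t ≠ 0 := norm_ne_zero_iff.1 (by simp [hu.norm_eq_one])
  have hq1 t : ‖v t / u t‖ = 1 := by rw [norm_div, hv1, hu.norm_eq_one, div_one]
  have hq_slit t : v t / u t ∈ slitPlane :=
    mem_slitPlane_of_norm_eq_one (hq1 t) fun h =>
      hne t (by rwa [div_eq_iff (hu0 t), neg_one_mul] at h)
  have hqc : Continuous fun t => v t / u t := hv.div hu.continuous hu0
  have hup := hu.periodic
  obtain ⟨θ, hθc, hθ, hθp⟩ := hu
  refine ⟨fun t => θ t + arg (v t / u t), hθc.add ?_, fun t => ?_, fun t => ?_⟩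
  · exact continuous_iff_continuousAt.2 fun t =>
      (continuousAt_arg (hq_slit t)).comp (f := fun t => v t / u t) hqc.continuousAt
  · have hq := norm_mul_exp_arg_mul_I (v t / u t)
    rw [hq1 t, ofReal_one, one_mul] at hq
    rw [ofReal_add, add_mul, exp_add, hq, ← hθ, mul_div_cancel₀ _ (hu0 t)]
  · simp only [hθp, hvp t, hup t]
    ring

/-- Nearby members of the family are never antipodal (uniformly in `t`, by periodicity and
compactness of `[0, 1]`), so by `of_ne_neg` the degree is locally constant. -/
theorem iff_of_homotopy {X : Type*} [TopologicalSpace X] [PreconnectedSpace X]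
    {H : X → ℝ → ℂ} (hH : Continuous fun p : X × ℝ => H p.1 p.2) (h1 : ∀ s t, ‖H s t‖ = 1)
    (hper : ∀ s, Function.Periodic (H s) 1) (a b : X) :
    CircleMapDegree (H a) d ↔ CircleMapDegree (H b) d := by
  have hne_neg s t : H s t ≠ -H s t := fun h => by
    have : H s t = 0 := by linear_combination h / 2
    simpa [this] using h1 s t
  have hnear s : ∀ᶠ s' in 𝓝 s, ∀ t, H s' t ≠ -H s t := by
    have hK : ∀ᶠ s' in 𝓝 s, ∀ t ∈ Set.Icc (0 : ℝ) 1, H s' t ≠ -H s t :=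
      isCompact_Icc.eventually_forall_of_forall_eventually fun t _ =>
        (isOpen_ne_fun hH (hH.comp (continuous_const.prodMk continuous_snd)).neg).mem_nhds
          (hne_neg s t)
    filter_upwards [hK] with s' hs' t
    have hfract : ∀ σ, H σ (Int.fract t) = H σ t := fun σ => by
      have := (hper σ).sub_int_mul_eq (n := ⌊t⌋) (x := t)
      rwa [mul_one, Int.self_sub_floor] at this
    rw [← hfract, ← hfract]
    exact hs' _ ⟨Int.fract_nonneg t, (Int.fract_lt_one t).le⟩
  have hcont s : Continuous (H s) := hH.comp (continuous_const.prodMk continuous_id)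
  have hloc : IsLocallyConstant fun s => CircleMapDegree (H s) d := by
    refine (IsLocallyConstant.iff_eventually_eq _).2 fun s => ?_
    filter_upwards [hnear s] with s' hs'
    refine propext ⟨fun h => h.of_ne_neg (hcont s) (h1 s) (hper s) fun t ht => hs' t ?_,
      fun h => h.of_ne_neg (hcont s') (h1 s') (hper s') hs'⟩
    rw [ht, neg_neg]
  exact iff_of_eq (hloc.apply_eq_of_preconnectedSpace a b)

end CircleMapDegree

lemma WindingNumber.circleMapDegree {γ : ℝ → ℂ} {n : ℤ} (hγ : WindingNumber γ 0 n) :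
    CircleMapDegree (fun t => γ t / (‖γ t‖ : ℂ)) n := by
  obtain ⟨g, hgc, hg, hgp⟩ := hγ
  refine ⟨fun t => (g t).im, continuous_im.comp hgc, fun t => ?_, fun t => ?_⟩
  · dsimp only
    rw [← hg, zero_add, norm_exp, ofReal_exp, ← exp_sub]
    congr 1
    apply Complex.ext <;> simp
  · simp [hgp]

lemma ofReal_mul_ne_of_mem_sqBdry {z w : ℂ} (hz : z ∈ SqBdry)
    (htop : z.im = 1 → w.im < 1) (hbot : z.im = -1 → -1 < w.im)
    (hright : z.re = 1 → w.re < 1) (hleft : z.re = -1 → -1 < w.re)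
    {s : ℝ} (hs : s ∈ Set.Icc (0 : ℝ) 1) : (s : ℂ) * w ≠ z := by
  intro h
  have hre : s * w.re = z.re := by simpa using congrArg re h
  have him : s * w.im = z.im := by simpa using congrArg im h
  have hlt : ∀ a : ℝ, a < 1 → s * a < 1 := fun a ha => by
    rcases hs.1.eq_or_lt with rfl | hs0
    · simp
    · exact (mul_lt_of_lt_one_right hs0 ha).trans_le hs.2
  rcases max_choice |z.re| |z.im| with hm | hm <;>
    rw [SqBdry, Set.mem_ofPred_eq, hm] at hz <;>
    rcases (abs_eq zero_le_one).1 hz with hz1 | hz1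
  · linarith [hlt _ (hright hz1)]
  · nlinarith [hlt (-w.re) (by linarith [hleft hz1])]
  · linarith [hlt _ (htop hz1)]
  · nlinarith [hlt (-w.im) (by linarith [hbot hz1])]

theorem statement4_general (f : ℂ → ℂ) (hf : ContinuousOn f SqBdry)
    (γ : ℝ → ℂ) (hloop : IsLoop γ) (hrange : Set.range γ = SqBdry)
    (hpos : WindingNumber γ 0 1)
    (htop : ∀ z ∈ SqBdry, z.im = 1 → (f z).im < 1)
    (hbot : ∀ z ∈ SqBdry, z.im = -1 → -1 < (f z).im)
    (hright : ∀ z ∈ SqBdry, z.re = 1 → (f z).re < 1)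
    (hleft : ∀ z ∈ SqBdry, z.re = -1 → -1 < (f z).re) :
    LefschetzIndex f γ 1 := by
  obtain ⟨hγc, hγp⟩ := hloop
  have hmem t : γ t ∈ SqBdry := hrange ▸ Set.mem_range_self t
  set V : unitInterval → ℝ → ℂ := fun s t => (s : ℝ) * f (γ t) - γ t
  have hV0 s t : V s t ≠ 0 := sub_ne_zero.2 <| ofReal_mul_ne_of_mem_sqBdry (hmem t)
    (htop _ (hmem t)) (hbot _ (hmem t)) (hright _ (hmem t)) (hleft _ (hmem t)) s.2
  have hVc : Continuous fun p : unitInterval × ℝ => V p.1 p.2 := by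
    have hfγ : Continuous fun t => f (γ t) := hf.comp_continuous hγc hmem
    exact ((continuous_ofReal.comp (continuous_subtype_val.comp continuous_fst)).mul
      (hfγ.comp continuous_snd)).sub (hγc.comp continuous_snd)
  have hdeg := CircleMapDegree.iff_of_homotopy (d := 1)
    (H := fun s t => V s t / (‖V s t‖ : ℂ))
    (hVc.div (continuous_ofReal.comp hVc.norm) fun p => by simpa using hV0 p.1 p.2)
    (fun s t => by simp [hV0 s t]) (fun s t => by simp only [V, hγp t]) 0 1
  have hdeg0 : CircleMapDegree (fun t => V 0 t / (‖V 0 t‖ : ℂ)) 1 := by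
    simpa [V, neg_div] using hpos.circleMapDegree.neg
  simpa [V, LefschetzIndex] using hdeg.1 hdeg0

theorem statement4 (f : ℂ → ℂ) (hf : ContinuousOn f SqBdry)
    (γ : ℝ → ℂ) (hloop : IsLoop γ) (hrange : Set.range γ = SqBdry)
    (hinj : Set.InjOn γ (Set.Ico (0:ℝ) 1))
    (hpos : WindingNumber γ 0 1)
    (htop : ∀ z ∈ SqBdry, z.im = 1 → (f z).im < 1)
    (hbot : ∀ z ∈ SqBdry, z.im = -1 → -1 < (f z).im)
    (hright : ∀ z ∈ SqBdry, z.re = 1 → (f z).re < 1)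
    (hleft : ∀ z ∈ SqBdry, z.re = -1 → -1 < (f z).re) :
    LefschetzIndex f γ 1 :=
  statement4_general f hf γ hloop hrange hpos htop hbot hright hleft
end
end

section
/- Let K be a closed subset of the open annulus A = S² \ {N,S}. Then K is inessential in A (i.e., does not separate N from S) if and only if there exists an arc in S² joining N and S that is disjoint from K. -/
/-!
An arc from `N` to `S` missing `K` has connected image, so `N` and `S` lie in one component of
`Kᶜ`. Conversely, project stereographically from a point of `K` (from any third point if `K` is
empty): `Kᶜ` becomes an open subset `V` of a normed space. There, the points that can be joined
to `S` by an arc in `V` form a relatively clopen subset of `V`, because an arc starting at `y` can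
be extended by a segment `[x, y] ⊆ V`: run along the segment until it first meets the arc, then
follow the arc.
-/

open Set Function unitInterval Topology
open scoped Convex

abbrev Sphere2 := Metric.sphere (0 : EuclideanSpace ℝ (Fin 3)) 1

theorem Set.Icc.convexComb_injective {a b : ℝ} {x y : Icc a b} (h : x ≠ y) :
    Injective (Icc.convexComb x y) := by
  intro s t hst
  have hxy : (y : ℝ) - x ≠ 0 := sub_ne_zero.mpr (Subtype.coe_ne_coe.mpr h.symm)
  have : ((1 - s) * x + s * y : ℝ) = (1 - t) * x + t * y := congrArg Subtype.val hst
  exact Subtype.ext (mul_right_cancel₀ hxy (by linarith))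

namespace Path

variable {X : Type*} [TopologicalSpace X] {a b c : X}

theorem subpath_injective {γ : Path a b} (hγ : Injective γ) {t₀ t₁ : I} (h : t₀ ≠ t₁) :
    Injective (γ.subpath t₀ t₁) :=
  hγ.comp (Icc.convexComb_injective h)

theorem trans_injective {γ₁ : Path a b} {γ₂ : Path b c} (h₁ : Injective γ₁)
    (h₂ : Injective γ₂) (h : ∀ s t, γ₁ s = γ₂ t → γ₁ s = b) : Injective (γ₁.trans γ₂) := by
  intro s t hst
  rw [trans_apply, trans_apply] at hst
  split_ifs at hst with hs ht ht
  · exact Subtype.ext (by linarith [congrArg Subtype.val (h₁ hst)])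
  · have := congrArg Subtype.val (h₂ ((hst.symm.trans (h _ _ hst)).trans γ₂.source.symm))
    simp only [Icc.coe_zero] at this
    linarith
  · have := congrArg Subtype.val (h₂ ((hst.trans (h _ _ hst.symm)).trans γ₂.source.symm))
    simp only [Icc.coe_zero] at this
    linarith
  · exact Subtype.ext (by linarith [congrArg Subtype.val (h₂ hst)])

end Path

def ArcJoinedIn {X : Type*} [TopologicalSpace X] (V : Set X) (x y : X) : Prop :=
  x = y ∨ ∃ γ : Path x y, Injective γ ∧ ∀ t, γ t ∈ V

namespace ArcJoinedIn

section Topological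

variable {X : Type*} [TopologicalSpace X] {V : Set X} {a b : X}

theorem of_subpath {γ : Path a b} (hγ : Injective γ) (hγV : ∀ t, γ t ∈ V) (s t : I) :
    ArcJoinedIn V (γ s) (γ t) := by
  by_cases hst : s = t
  · exact Or.inl (congrArg γ hst)
  · exact Or.inr ⟨γ.subpath s t, Path.subpath_injective hγ hst, fun _ ↦ hγV _⟩

theorem of_image {Y : Type*} [TopologicalSpace Y] (e : OpenPartialHomeomorph X Y)
    (hV : V ⊆ e.source) (ha : a ∈ V) (hb : b ∈ V) (h : ArcJoinedIn (e '' V) (e a) (e b)) :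
    ArcJoinedIn V a b := by
  rcases h with hab | ⟨γ, hγ, hγV⟩
  · exact Or.inl (e.injOn (hV ha) (hV hb) hab)
  have hγtarget : ∀ t, γ t ∈ e.target := fun t ↦ by
    obtain ⟨v, hv, hve⟩ := hγV t
    exact hve ▸ e.map_source (hV hv)
  refine Or.inr ⟨(γ.map' (e.continuousOn_symm.mono (range_subset_iff.2 hγtarget))).cast
    (e.left_inv (hV ha)).symm (e.left_inv (hV hb)).symm, ?_, fun t ↦ ?_⟩
  · intro s t hst
    exact hγ (e.symm.injOn (by simpa using hγtarget s) (by simpa using hγtarget t) hst)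
  · obtain ⟨v, hv, hve⟩ := hγV t
    change e.symm (γ t) ∈ V
    rwa [← hve, e.left_inv (hV hv)]

end Topological

section Normed

variable {F : Type*} [NormedAddCommGroup F] [NormedSpace ℝ F] {V : Set F} {x y z : F}

theorem of_segment_subset (hseg : [x -[ℝ] y] ⊆ V) (h : ArcJoinedIn V y z) :
    ArcJoinedIn V x z := by
  set γ := Path.segment x y
  have hγV : ∀ t, γ t ∈ V := fun t ↦ hseg (Path.range_segment x y ▸ mem_range_self t)
  rcases h with rfl | ⟨q, hq, hqV⟩
  · by_cases hxy : x = y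
    · exact Or.inl hxy
    · simpa [γ] using of_subpath (Path.segment_injective_of_ne hxy) hγV 0 1
  by_cases hx : x ∈ range q
  · obtain ⟨u, rfl⟩ := hx
    simpa using of_subpath hq hqV u 1
  have hγ : Injective γ := Path.segment_injective_of_ne fun hxy ↦ hx ⟨0, by simp [hxy]⟩
  -- `γ t₀ = q u₀` is the first point of the segment on the arc `q`.
  obtain ⟨t₀, ⟨u₀, hu₀⟩, ht₀⟩ := ((isCompact_range q.continuous).isClosed.preimage
    γ.continuous).isCompact.exists_isLeast ⟨1, 0, by simp [γ]⟩
  have ht₀0 : t₀ ≠ 0 := by rintro rfl; exact hx ⟨u₀, by simpa [γ] using hu₀⟩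
  by_cases hu₀1 : u₀ = 1
  · subst hu₀1
    simpa [γ, ← hu₀] using of_subpath hγ hγV 0 t₀
  refine Or.inr ⟨((γ.subpath 0 t₀).trans ((q.subpath u₀ 1).cast hu₀.symm rfl)).cast
    (by simp [γ]) q.target.symm, ?_, fun t ↦ ?_⟩
  · simp only [Path.cast_coe]
    refine Path.trans_injective (Path.subpath_injective hγ (Ne.symm ht₀0))
      (Path.subpath_injective hq hu₀1) fun s t hst ↦ ?_
    have hle : Icc.convexComb 0 t₀ s ≤ t₀ := Icc.convexComb_le (unitInterval.nonneg' (t := t₀)) s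
    have hge : t₀ ≤ Icc.convexComb 0 t₀ s := ht₀ ⟨_, hst.symm⟩
    change γ _ = γ t₀
    rw [le_antisymm hle hge]
  · simp only [Path.cast_coe, Path.trans_apply]
    split_ifs
    · exact hγV _
    · exact hqV _

theorem of_mem_connectedComponentIn (hV : IsOpen V) (hy : y ∈ connectedComponentIn V x) :
    ArcJoinedIn V x y := by
  have hyV : y ∈ V := connectedComponentIn_subset V x hy
  have hxV : x ∈ V := connectedComponentIn_nonempty_iff.mp ⟨y, hy⟩
  -- Arc-joinability to `y` is locally constant on `V`, because balls are convex.
  have hloc : ∀ a ∈ V, ∀ᶠ b in 𝓝 a, b ∈ V ∧ (ArcJoinedIn V b y ↔ ArcJoinedIn V a y) := by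
    intro a ha
    obtain ⟨ε, hε, hball⟩ := Metric.isOpen_iff.mp hV a ha
    filter_upwards [Metric.ball_mem_nhds a hε] with b hb
    have hseg {u v} (hu : u ∈ Metric.ball a ε) (hv : v ∈ Metric.ball a ε) : [u -[ℝ] v] ⊆ V :=
      ((convex_ball a ε).segment_subset hu hv).trans hball
    exact ⟨hball hb, ⟨of_segment_subset (hseg (Metric.mem_ball_self hε) hb),
      of_segment_subset (hseg hb (Metric.mem_ball_self hε))⟩⟩
  have hopen (P : Prop → Prop) (hP : ∀ p q : Prop, (p ↔ q) → (P p ↔ P q)) :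
      IsOpen {a | a ∈ V ∧ P (ArcJoinedIn V a y)} := by
    refine isOpen_iff_mem_nhds.mpr fun a ⟨ha, hPa⟩ ↦ ?_
    filter_upwards [hloc a ha] with b ⟨hb, hba⟩
    exact ⟨hb, (hP _ _ hba).mpr hPa⟩
  have hsub : connectedComponentIn V y ⊆ {a | a ∈ V ∧ ArcJoinedIn V a y} :=
    isPreconnected_connectedComponentIn.subset_left_of_subset_union
      (hopen id fun _ _ ↦ id) (hopen Not fun _ _ h ↦ not_congr h)
      (disjoint_left.mpr fun _ h h' ↦ h'.2 h.2)
      (fun a ha ↦ (em (ArcJoinedIn V a y)).imp (⟨connectedComponentIn_subset V y ha, ·⟩)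
        (⟨connectedComponentIn_subset V y ha, ·⟩))
      ⟨y, mem_connectedComponentIn hyV, hyV, Or.inl rfl⟩
  exact (hsub (connectedComponentIn_eq hy ▸ mem_connectedComponentIn hxV)).2

end Normed

end ArcJoinedIn

section Sphere

variable {E : Type*} [NormedAddCommGroup E] [InnerProductSpace ℝ E]

theorem ArcJoinedIn.of_mem_connectedComponentIn_sphere {q : Metric.sphere (0 : E) 1}
    {W : Set (Metric.sphere (0 : E) 1)} (hW : IsOpen W) (hqW : q ∉ W)
    {x y : Metric.sphere (0 : E) 1} (hy : y ∈ connectedComponentIn W x) : ArcJoinedIn W x y := by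
  set e := stereographic (norm_eq_of_mem_sphere q)
  have hWe : W ⊆ e.source := by
    rw [stereographic_source]
    rintro w hw rfl
    exact hqW hw
  have hcomp : connectedComponentIn W x ⊆ W := connectedComponentIn_subset W x
  have hxW : x ∈ W := connectedComponentIn_nonempty_iff.mp ⟨y, hy⟩
  refine of_image e hWe hxW (hcomp hy)
    (of_mem_connectedComponentIn (e.isOpen_image_of_subset_source hW hWe) ?_)
  exact (isPreconnected_connectedComponentIn.image e (e.continuousOn.mono (hcomp.trans hWe)))
    |>.subset_connectedComponentIn ⟨x, mem_connectedComponentIn hxW, rfl⟩ (image_mono hcomp)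
      ⟨y, hy, rfl⟩

theorem isPreconnected_sphere_compl_singleton (q : Metric.sphere (0 : E) 1) :
    IsPreconnected ({q}ᶜ : Set (Metric.sphere (0 : E) 1)) := by
  set e := stereographic (norm_eq_of_mem_sphere q)
  have htarget : e.target = univ := stereographic_target _
  have := isPreconnected_univ.image e.symm (htarget ▸ e.continuousOn_symm)
  rwa [← htarget, e.symm_image_target_eq_source, stereographic_source] at this

end Sphere

theorem Sphere2.exists_ne_ne (N S : Sphere2) : ∃ q : Sphere2, q ≠ N ∧ q ≠ S := by
  have : Fact (Module.finrank ℝ (EuclideanSpace ℝ (Fin 3)) = 2 + 1) :=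
    ⟨finrank_euclideanSpace_fin⟩
  set e := stereographic' 2 N
  obtain ⟨v, hv⟩ := exists_ne (e S)
  have hvt : v ∈ e.target := by simp [e]
  refine ⟨e.symm v, by simpa [e] using e.map_target hvt, fun h ↦ hv ?_⟩
  rw [← h, e.right_inv hvt]

/-- Let `K` be a closed subset of the open annulus `A = S² \ {N,S}`.
Then `K` is inessential in `A` (does not separate `N` from `S`, i.e. `N` and `S` lie in
the same connected component of `S² \ K`) if and only if there exists an arc (injective
path) in `S²` joining `N` and `S` disjoint from `K`. -/
theorem statement19 (N S : Sphere2) (hNS : N ≠ S) (K : Set Sphere2)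
    (hKclosed : IsClosed K) (hKA : K ⊆ {N, S}ᶜ) :
    connectedComponentIn Kᶜ N = connectedComponentIn Kᶜ S ↔
      ∃ p : Path N S, Function.Injective p ∧ ∀ t, p t ∉ K := by
  constructor
  · intro hcomp
    have hSK : S ∉ K := fun h ↦ hKA h (by simp)
    have hS : S ∈ connectedComponentIn Kᶜ N := hcomp ▸ mem_connectedComponentIn hSK
    rcases K.eq_empty_or_nonempty with rfl | ⟨k, hk⟩
    · obtain ⟨q, hqN, hqS⟩ := Sphere2.exists_ne_ne N S
      have hS' : S ∈ connectedComponentIn {q}ᶜ N :=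
        (isPreconnected_sphere_compl_singleton q).subset_connectedComponentIn hqN.symm
          subset_rfl hqS.symm
      obtain ⟨γ, hγ, -⟩ := (ArcJoinedIn.of_mem_connectedComponentIn_sphere
        isOpen_compl_singleton (not_not_intro rfl) hS').resolve_left hNS
      exact ⟨γ, hγ, fun _ ↦ notMem_empty _⟩
    · exact (ArcJoinedIn.of_mem_connectedComponentIn_sphere hKclosed.isOpen_compl
        (not_not_intro hk) hS).resolve_left hNS
  · rintro ⟨γ, -, hγK⟩
    exact connectedComponentIn_eq <| (isPreconnected_range γ.continuous).subset_connectedComponentIn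
      ⟨0, γ.source⟩ (range_subset_iff.2 hγK) ⟨1, γ.target⟩
end
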